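/- If (S₁, T₁) and (S₂, T₂) are both minimum (s,t)-cuts of a directed graph with nonnegative capacities, then (S₁ ∩ S₂, V \ (S₁ ∩ S₂)) and (S₁ ∪ S₂, V \ (S₁ ∪ S₂)) are also minimum (s,t)-cuts. -/
import Mathlib


/-- `cutCap c S` is the total capacity of arcs leaving `S`. -/
noncomputable def cutCap {V : Type*} [Fintype V] [DecidableEq V]
    (c : V → V → ℝ) (S : Finset V) : ℝ :=
  ∑ i ∈ S, ∑ j ∈ Sᶜ, c i j

lemma cutCap_eq {V : Type*} [Fintype V] [DecidableEq V]
    (c : V → V → ℝ) (S : Finset V) :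
    cutCap c S = ∑ i : V, ∑ j : V,
      (if i ∈ S then (1:ℝ) else 0) * (if j ∈ S then 0 else 1) * c i j := by
  unfold cutCap
  rw [← Finset.sum_filter_add_sum_filter_not Finset.univ (· ∈ S)]
  have h1 : ∀ i : V, ∑ j : V, (if i ∈ S then (1:ℝ) else 0) * (if j ∈ S then 0 else 1) * c i j
      = (if i ∈ S then (1:ℝ) else 0) * ∑ j ∈ Sᶜ, c i j := by
    intro i
    rw [Finset.mul_sum]
    rw [← Finset.sum_filter_add_sum_filter_not Finset.univ (· ∈ S)]
    have : ∑ j ∈ Finset.univ.filter (· ∈ S),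
        (if i ∈ S then (1:ℝ) else 0) * (if j ∈ S then 0 else 1) * c i j = 0 := by
      apply Finset.sum_eq_zero
      intro j hj
      simp only [Finset.mem_filter] at hj
      simp [hj.2]
    rw [this, zero_add]
    have : Finset.univ.filter (· ∉ S) = Sᶜ := by
      ext x; simp
    rw [this]
    apply Finset.sum_congr rfl
    intro j hj
    simp only [Finset.mem_compl] at hj
    simp [hj, mul_assoc]
  simp only [h1]
  have h2 : ∑ i ∈ Finset.univ.filter (· ∈ S),
      (if i ∈ S then (1:ℝ) else 0) * ∑ j ∈ Sᶜ, c i j = ∑ i ∈ S, ∑ j ∈ Sᶜ, c i j := by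
    rw [Finset.filter_univ_mem]
    apply Finset.sum_congr rfl
    intro i hi; simp [hi]
  have h3 : ∑ i ∈ Finset.univ.filter (· ∉ S),
      (if i ∈ S then (1:ℝ) else 0) * ∑ j ∈ Sᶜ, c i j = 0 := by
    apply Finset.sum_eq_zero
    intro i hi
    simp only [Finset.mem_filter] at hi
    simp [hi.2]
  rw [h2, h3, add_zero]

lemma cutCap_submodular {V : Type*} [Fintype V] [DecidableEq V]
    (c : V → V → ℝ) (hnonneg : ∀ i j, 0 ≤ c i j) (S T : Finset V) :
    cutCap c (S ∪ T) + cutCap c (S ∩ T) ≤ cutCap c S + cutCap c T := by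
  simp only [cutCap_eq, ← Finset.sum_add_distrib]
  apply Finset.sum_le_sum
  intro i _
  apply Finset.sum_le_sum
  intro j _
  have hc := hnonneg i j
  by_cases h1 : i ∈ S <;> by_cases h2 : i ∈ T <;>
    by_cases h3 : j ∈ S <;> by_cases h4 : j ∈ T <;>
    simp [Finset.mem_union, Finset.mem_inter, h1, h2, h3, h4] <;> linarith

/-- Intersections and unions of minimum (s,t)-cuts are minimum cuts. -/
theorem min_cut_lattice {V : Type*} [Fintype V] [DecidableEq V]
    (c : V → V → ℝ) (hnonneg : ∀ i j, 0 ≤ c i j)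
    (s t : V) (hst : s ≠ t)
    (S₁ S₂ : Finset V)
    (hS₁s : s ∈ S₁) (hS₁t : t ∉ S₁) (hS₂s : s ∈ S₂) (hS₂t : t ∉ S₂)
    (hmin₁ : ∀ S : Finset V, s ∈ S → t ∉ S → cutCap c S₁ ≤ cutCap c S)
    (hmin₂ : ∀ S : Finset V, s ∈ S → t ∉ S → cutCap c S₂ ≤ cutCap c S) :
    (∀ S : Finset V, s ∈ S → t ∉ S → cutCap c (S₁ ∩ S₂) ≤ cutCap c S)
    ∧ (∀ S : Finset V, s ∈ S → t ∉ S → cutCap c (S₁ ∪ S₂) ≤ cutCap c S) := by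
  have hsi : s ∈ S₁ ∩ S₂ := Finset.mem_inter.mpr ⟨hS₁s, hS₂s⟩
  have hti : t ∉ S₁ ∩ S₂ := fun h => hS₁t (Finset.mem_inter.mp h).1
  have hsu : s ∈ S₁ ∪ S₂ := Finset.mem_union_left _ hS₁s
  have htu : t ∉ S₁ ∪ S₂ := fun h => (Finset.mem_union.mp h).elim hS₁t hS₂t
  have hsub := cutCap_submodular c hnonneg S₁ S₂
  have h1 := hmin₁ (S₁ ∪ S₂) hsu htu
  have h2 := hmin₂ (S₁ ∩ S₂) hsi hti
  have h3 := hmin₁ (S₁ ∩ S₂) hsi hti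
  have h4 := hmin₂ (S₁ ∪ S₂) hsu htu
  constructor <;> intro S hs ht
  · have := hmin₁ S hs ht; linarith
  · have := hmin₁ S hs ht; linarith
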